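/- Let (M,d) be a pseudometric space, N a finite nonempty set of agents (points of M) partitioned into a finite nonempty collection G of nonempty groups, and A a finite nonempty set of alternatives (points of M). Let top : N → A satisfy d(i,x) ≤ d(i, top(i)) for every agent i and every alternative x. Let r : G → A and suppose that for every group g there is a bijection μ_g : g → g such that d(i, top(μ_g(i))) ≤ d(i, r(g)) for every i ∈ g (the domination graph of r(g) within group g attains a perfect matching). Let R = r(G), and suppose w ∈ R maximizes the total size of the groups it represents, i.e., for every x ∈ R, Σ_{g : r(g)=x} |g| ≤ Σ_{g : r(g)=w} |g|. Then for every alternative o ∈ A, Σ_{i∈N} d(i,o) ≤ (4|R| − 1) · Σ_{i∈N} d(i,w); in particular, Σ_{i∈N} d(i,o) ≤ (4·min(|A|,|G|) − 1) · Σ_{i∈N} d(i,w). -/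
import Mathlib


/-- Distortion upper bound `4·|R| − 1 ≤ 4·min(m,k) − 1` for the
Max-Weight-of-Domination mechanism in obnoxious distributed metric voting. -/
theorem maxWeightOfDomination_distortion
    {M ι κ : Type*} [PseudoMetricSpace M] [DecidableEq M] [DecidableEq ι] [DecidableEq κ]
    (N : Finset ι) (hN : N.Nonempty) (loc : ι → M)
    (G : Finset κ) (hG : G.Nonempty) (grp : κ → Finset ι)
    (hgne : ∀ g ∈ G, (grp g).Nonempty)
    (hdisj : ∀ g ∈ G, ∀ g' ∈ G, g ≠ g' → Disjoint (grp g) (grp g'))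
    (hcover : N = G.biUnion grp)
    (A : Finset M) (hA : A.Nonempty)
    (top : ι → M) (htopA : ∀ i ∈ N, top i ∈ A)
    (htop : ∀ i ∈ N, ∀ x ∈ A, dist (loc i) x ≤ dist (loc i) (top i))
    (r : κ → M) (hrA : ∀ g ∈ G, r g ∈ A)
    (μ : κ → ι → ι) (hμ : ∀ g ∈ G, Set.BijOn (μ g) ↑(grp g) ↑(grp g))
    (hdom : ∀ g ∈ G, ∀ i ∈ grp g,
      dist (loc i) (top (μ g i)) ≤ dist (loc i) (r g))
    (R : Finset M) (hR : R = G.image r)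
    (w : M) (hw : w ∈ R)
    (hwmax : ∀ x ∈ R,
      ∑ g ∈ G.filter (fun g => r g = x), (grp g).card ≤
        ∑ g ∈ G.filter (fun g => r g = w), (grp g).card)
    (o : M) (ho : o ∈ A) :
    ∑ i ∈ N, dist (loc i) o ≤ (4 * (R.card : ℝ) - 1) * ∑ i ∈ N, dist (loc i) w ∧
    ∑ i ∈ N, dist (loc i) o ≤
      (4 * (min A.card G.card : ℝ) - 1) * ∑ i ∈ N, dist (loc i) w := by
  classical
  have hmemN : ∀ g ∈ G, ∀ i ∈ grp g, i ∈ N := by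
    intro g hg i hi
    rw [hcover, Finset.mem_biUnion]; exact ⟨g, hg, hi⟩
  have hsplit : ∀ x : M, ∑ i ∈ N, dist (loc i) x = ∑ g ∈ G, ∑ i ∈ grp g, dist (loc i) x := by
    intro x
    rw [hcover]
    exact Finset.sum_biUnion (fun g hg g' hg' hne => hdisj g hg g' hg' hne)
  have hreindex : ∀ g ∈ G, ∀ f : ι → ℝ,
      ∑ i ∈ grp g, f (μ g i) = ∑ i ∈ grp g, f i := by
    intro g hg f
    refine Finset.sum_nbij (i := μ g) (fun a ha => ?_) (fun a ha b hb hab => ?_)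
      (fun b hb => ?_) (fun a ha => rfl)
    · exact_mod_cast (hμ g hg).mapsTo (by exact_mod_cast ha)
    · exact (hμ g hg).injOn (by exact_mod_cast ha) (by exact_mod_cast hb) hab
    · exact (hμ g hg).surjOn (by exact_mod_cast hb)
  -- Lemma A : Σ d(i, top i) ≤ 2 Σ d(i,w) + Σ d(i, r g)
  have hAgrp : ∀ g ∈ G, ∑ i ∈ grp g, dist (loc i) (top i)
      ≤ 2 * (∑ i ∈ grp g, dist (loc i) w) + ∑ i ∈ grp g, dist (loc i) (r g) := by
    intro g hg
    have h1 : ∑ i ∈ grp g, dist (loc i) (top i)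
        = ∑ i ∈ grp g, dist (loc (μ g i)) (top (μ g i)) :=
      (hreindex g hg fun j => dist (loc j) (top j)).symm
    have h2 : ∑ i ∈ grp g, dist (loc (μ g i)) (top (μ g i))
        ≤ ∑ i ∈ grp g, (dist (loc (μ g i)) w + dist (loc i) w + dist (loc i) (r g)) := by
      refine Finset.sum_le_sum fun i hi => ?_
      calc dist (loc (μ g i)) (top (μ g i))
          ≤ dist (loc (μ g i)) (loc i) + dist (loc i) (top (μ g i)) := dist_triangle _ _ _
        _ ≤ (dist (loc (μ g i)) w + dist w (loc i)) + dist (loc i) (r g) :=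
            add_le_add (dist_triangle _ _ _) (hdom g hg i hi)
        _ = dist (loc (μ g i)) w + dist (loc i) w + dist (loc i) (r g) := by
            rw [dist_comm w (loc i)]
    have h3 : ∑ i ∈ grp g, (dist (loc (μ g i)) w + dist (loc i) w + dist (loc i) (r g))
        = 2 * (∑ i ∈ grp g, dist (loc i) w) + ∑ i ∈ grp g, dist (loc i) (r g) := by
      rw [Finset.sum_add_distrib, Finset.sum_add_distrib,
        hreindex g hg (fun j => dist (loc j) w)]
      ring
    linarith
  -- per-group bound via dist w (r g)
  have hrgw : ∀ g ∈ G, ∑ i ∈ grp g, dist (loc i) (r g)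
      ≤ (∑ i ∈ grp g, dist (loc i) w) + ((grp g).card : ℝ) * dist w (r g) := by
    intro g hg
    have h := Finset.sum_le_sum (fun i (hi : i ∈ grp g) => dist_triangle (loc i) w (r g))
    simpa [Finset.sum_add_distrib, Finset.sum_const, nsmul_eq_mul] using h
  -- Lemma C : n_w * d(w,x) ≤ 4 SW(w) for any alternative x
  have hC : ∀ x ∈ A, ((∑ g ∈ G.filter (fun g => r g = w), (grp g).card : ℕ) : ℝ) * dist w x
      ≤ 4 * ∑ i ∈ N, dist (loc i) w := by
    intro x hx
    have hper : ∀ g ∈ G.filter (fun g => r g = w),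
        ((grp g).card : ℝ) * dist w x ≤ 4 * ∑ i ∈ grp g, dist (loc i) w := by
      intro g hgf
      obtain ⟨hg, hrg⟩ := Finset.mem_filter.mp hgf
      have hb : ∀ j ∈ grp g, dist w x ≤ dist (loc j) w + dist (loc j) (top j) := by
        intro j hj
        calc dist w x ≤ dist w (loc j) + dist (loc j) x := dist_triangle _ _ _
          _ ≤ dist (loc j) w + dist (loc j) (top j) := by
              rw [dist_comm w (loc j)]
              exact add_le_add le_rfl (htop j (hmemN g hg j hj) x hx)
      have h1 : ((grp g).card : ℝ) * dist w x ≤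
          ∑ j ∈ grp g, (dist (loc j) w + dist (loc j) (top j)) := by
        calc ((grp g).card : ℝ) * dist w x = ∑ _j ∈ grp g, dist w x := by
              simp [Finset.sum_const, nsmul_eq_mul]
          _ ≤ _ := Finset.sum_le_sum hb
      have h2 : ∑ j ∈ grp g, dist (loc j) (top j) ≤ 3 * ∑ j ∈ grp g, dist (loc j) w := by
        have h := hAgrp g hg
        rw [hrg] at h
        linarith
      rw [Finset.sum_add_distrib] at h1
      linarith
    have hsum1 : ((∑ g ∈ G.filter (fun g => r g = w), (grp g).card : ℕ) : ℝ) * dist w x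
        = ∑ g ∈ G.filter (fun g => r g = w), ((grp g).card : ℝ) * dist w x := by
      rw [Nat.cast_sum, Finset.sum_mul]
    have hsub : ∑ g ∈ G.filter (fun g => r g = w), ∑ i ∈ grp g, dist (loc i) w
        ≤ ∑ g ∈ G, ∑ i ∈ grp g, dist (loc i) w :=
      Finset.sum_le_sum_of_subset_of_nonneg (Finset.filter_subset _ G)
        (fun g _ _ => Finset.sum_nonneg fun i _ => dist_nonneg)
    calc ((∑ g ∈ G.filter (fun g => r g = w), (grp g).card : ℕ) : ℝ) * dist w x
        = ∑ g ∈ G.filter (fun g => r g = w), ((grp g).card : ℝ) * dist w x := hsum1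
      _ ≤ ∑ g ∈ G.filter (fun g => r g = w), (4 * ∑ i ∈ grp g, dist (loc i) w) :=
          Finset.sum_le_sum hper
      _ = 4 * ∑ g ∈ G.filter (fun g => r g = w), ∑ i ∈ grp g, dist (loc i) w := by
          rw [Finset.mul_sum]
      _ ≤ 4 * ∑ g ∈ G, ∑ i ∈ grp g, dist (loc i) w := by linarith
      _ = 4 * ∑ i ∈ N, dist (loc i) w := by rw [hsplit w]
  have hswnn : (0:ℝ) ≤ ∑ i ∈ N, dist (loc i) w :=
    Finset.sum_nonneg fun i _ => dist_nonneg
  -- main bound step 1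
  have ho1 : ∑ i ∈ N, dist (loc i) o ≤
      3 * (∑ i ∈ N, dist (loc i) w) + ∑ g ∈ G, ((grp g).card : ℝ) * dist w (r g) := by
    rw [hsplit o, hsplit w, Finset.mul_sum, ← Finset.sum_add_distrib]
    refine Finset.sum_le_sum fun g hg => ?_
    have hto : ∑ i ∈ grp g, dist (loc i) o ≤ ∑ i ∈ grp g, dist (loc i) (top i) :=
      Finset.sum_le_sum fun i hi => htop i (hmemN g hg i hi) o ho
    have h1 := hAgrp g hg
    have h2 := hrgw g hg
    linarith
  -- fiberwise decomposition
  have hfib : ∑ g ∈ G, ((grp g).card : ℝ) * dist w (r g)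
      = ∑ x ∈ R, ((∑ g ∈ G.filter (fun g => r g = x), (grp g).card : ℕ) : ℝ) * dist w x := by
    rw [← Finset.sum_fiberwise_of_maps_to (g := r)
      (fun g hg => hR ▸ Finset.mem_image_of_mem r hg)
      (fun g => ((grp g).card : ℝ) * dist w (r g))]
    refine Finset.sum_congr rfl fun x hx => ?_
    rw [Nat.cast_sum, Finset.sum_mul]
    exact Finset.sum_congr rfl fun g hg => by rw [(Finset.mem_filter.mp hg).2]
  -- bound the fiberwise sum
  have herase : ∑ x ∈ R, ((∑ g ∈ G.filter (fun g => r g = x), (grp g).card : ℕ) : ℝ) * dist w x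
      ≤ ((R.card : ℝ) - 1) * (4 * ∑ i ∈ N, dist (loc i) w) := by
    rw [← Finset.add_sum_erase R _ hw]
    have hzero : ((∑ g ∈ G.filter (fun g => r g = w), (grp g).card : ℕ) : ℝ) * dist w w = 0 := by
      simp
    have hterm : ∀ x ∈ R.erase w,
        ((∑ g ∈ G.filter (fun g => r g = x), (grp g).card : ℕ) : ℝ) * dist w x
        ≤ 4 * ∑ i ∈ N, dist (loc i) w := by
      intro x hxe
      have hxR : x ∈ R := Finset.mem_of_mem_erase hxe
      have hxA : x ∈ A := by
        rw [hR] at hxR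
        obtain ⟨g, hg, rfl⟩ := Finset.mem_image.mp hxR
        exact hrA g hg
      calc ((∑ g ∈ G.filter (fun g => r g = x), (grp g).card : ℕ) : ℝ) * dist w x
          ≤ ((∑ g ∈ G.filter (fun g => r g = w), (grp g).card : ℕ) : ℝ) * dist w x := by
            have := hwmax x hxR
            exact mul_le_mul_of_nonneg_right (by exact_mod_cast this) dist_nonneg
        _ ≤ 4 * ∑ i ∈ N, dist (loc i) w := hC x hxA
    have hcardsum : ∑ x ∈ R.erase w,
        ((∑ g ∈ G.filter (fun g => r g = x), (grp g).card : ℕ) : ℝ) * dist w x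
        ≤ ((R.erase w).card : ℝ) * (4 * ∑ i ∈ N, dist (loc i) w) := by
      have := Finset.sum_le_card_nsmul (R.erase w) _ _ hterm
      simpa [nsmul_eq_mul] using this
    have hcarde : ((R.erase w).card : ℝ) = (R.card : ℝ) - 1 := by
      rw [Finset.card_erase_of_mem hw]
      have h1 : 1 ≤ R.card := Finset.card_pos.mpr ⟨w, hw⟩
      push_cast [Nat.cast_sub h1]
      ring
    rw [hcarde] at hcardsum
    linarith
  have hmain : ∑ i ∈ N, dist (loc i) o ≤
      (4 * (R.card : ℝ) - 1) * ∑ i ∈ N, dist (loc i) w := by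
    rw [hfib] at ho1
    have hring : 3 * (∑ i ∈ N, dist (loc i) w)
        + ((R.card : ℝ) - 1) * (4 * ∑ i ∈ N, dist (loc i) w)
        = (4 * (R.card : ℝ) - 1) * ∑ i ∈ N, dist (loc i) w := by ring
    linarith
  refine ⟨hmain, hmain.trans ?_⟩
  have hcard : (R.card : ℝ) ≤ ((min A.card G.card : ℕ) : ℝ) := by
    have h1 : R.card ≤ A.card := by
      refine Finset.card_le_card ?_
      rw [hR]
      intro x hx
      obtain ⟨g, hg, rfl⟩ := Finset.mem_image.mp hx
      exact hrA g hg
    have h2 : R.card ≤ G.card := hR ▸ Finset.card_image_le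
    exact_mod_cast le_min h1 h2
  have hle : (4 * (R.card : ℝ) - 1) ≤ 4 * (min A.card G.card : ℝ) - 1 := by
    push_cast at hcard ⊢
    linarith
  exact mul_le_mul_of_nonneg_right hle hswnn
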